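/- Let η ∈ (0,1] and c > 0, and set Γ_c = {(x,y) ∈ ℝ² : x = c|y|^η}. There exist C > 1 and ε > 0 such that for all (x₀, y₀) with x₀ ≥ 0, x₀ < ε and |y₀| < ε: C⁻¹ · | |y₀| − (c⁻¹x₀)^{1/η} | ≤ dist((x₀,y₀), Γ_c) ≤ C · | |y₀| − (c⁻¹x₀)^{1/η} |. -/

import Mathlib

/-! Every point `w` of `Γ_c` satisfies `|w₁| = (c⁻¹ w₀)^{1/η}`. Hence the point `(x₀, ±t₀)`,
`t₀ = (c⁻¹ x₀)^{1/η}`, with the sign of `y₀` lies on `Γ_c` at distance `||y₀| - t₀|`. Conversely,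
since `1/η ≥ 1` the map `u ↦ (c⁻¹ u)^{1/η}` is `K`-Lipschitz on `[0, 2c]` with
`K = η⁻¹ 2^{1/η - 1} c⁻¹`, so for `w ∈ Γ_c` with `|w₁| ≤ 2` (hence `w₀ ≤ 2c`) we get
`||y₀| - t₀| ≤ ||y₀| - |w₁|| + ||w₁| - t₀| ≤ (1 + K) dist((x₀,y₀), w)`; points with
`|w₁| > 2` are at distance `> 1 ≥ ||y₀| - t₀|` once `x₀ ≤ c` and `|y₀| ≤ 1`. -/

noncomputable section

/-- The point `(a, b)` in Euclidean `ℝ²`. -/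
def pt (a b : ℝ) : EuclideanSpace ℝ (Fin 2) := (WithLp.equiv 2 (Fin 2 → ℝ)).symm ![a, b]

open Metric Set

theorem abs_rpow_sub_rpow_le {p A u v : ℝ} (hp : 1 ≤ p) (hu : u ∈ Icc 0 A) (hv : v ∈ Icc 0 A) :
    |u ^ p - v ^ p| ≤ p * A ^ (p - 1) * |u - v| := by
  refine (convex_Icc 0 A).norm_image_sub_le_of_norm_hasDerivWithin_le
    (f := fun x ↦ x ^ p) (fun x _ ↦ (Real.hasDerivAt_rpow_const (Or.inr hp)).hasDerivWithinAt)
    (fun x hx ↦ ?_) hv hu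
  rw [Real.norm_eq_abs, abs_of_nonneg (by have := hx.1; positivity)]
  exact mul_le_mul_of_nonneg_left (Real.rpow_le_rpow hx.1 hx.2 (by linarith)) (by linarith)

@[simp] theorem pt_apply_zero (a b : ℝ) : pt a b 0 = a := rfl

@[simp] theorem pt_apply_one (a b : ℝ) : pt a b 1 = b := rfl

theorem dist_pt_pt_of_fst_eq (a b b' : ℝ) : dist (pt a b) (pt a b') = |b - b'| := by
  simp [EuclideanSpace.dist_eq, Fin.sum_univ_two, Real.dist_eq, Real.sqrt_sq_eq_abs]

def rpowCurve (c η : ℝ) : Set (EuclideanSpace ℝ (Fin 2)) := {w | w 0 = c * |w 1| ^ η}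

section

variable {c η : ℝ}

theorem pt_mem_rpowCurve_iff {a b : ℝ} : pt a b ∈ rpowCurve c η ↔ a = c * |b| ^ η := Iff.rfl

theorem zero_mem_rpowCurve (hη : 0 < η) : (0 : EuclideanSpace ℝ (Fin 2)) ∈ rpowCurve c η := by
  simp [rpowCurve, Real.zero_rpow hη.ne']

theorem abs_apply_one_eq_of_mem_rpowCurve (hc : 0 < c) (hη : 0 < η)
    {w : EuclideanSpace ℝ (Fin 2)} (hw : w ∈ rpowCurve c η) :
    |w 1| = (c⁻¹ * w 0) ^ (1 / η) := by
  rw [hw, inv_mul_cancel_left₀ hc.ne', one_div, Real.rpow_rpow_inv (abs_nonneg _) hη.ne']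

theorem infDist_pt_rpowCurve_le (hc : 0 < c) (hη : 0 < η) {x : ℝ} (hx : 0 ≤ x) (y : ℝ) :
    infDist (pt x y) (rpowCurve c η) ≤ |(|y| - (c⁻¹ * x) ^ (1 / η))| := by
  set t := (c⁻¹ * x) ^ (1 / η)
  have ht : 0 ≤ t := by positivity
  have htη : t ^ η = c⁻¹ * x := by
    simp only [t, one_div]
    exact Real.rpow_inv_rpow (by positivity) hη.ne'
  have hmem : ∀ b, |b| = t → pt x b ∈ rpowCurve c η := by
    intro b hb
    rw [pt_mem_rpowCurve_iff, hb, htη, mul_inv_cancel_left₀ hc.ne']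
  rcases le_total 0 y with hy | hy
  · calc infDist (pt x y) (rpowCurve c η) ≤ dist (pt x y) (pt x t) :=
          infDist_le_dist_of_mem (hmem t (abs_of_nonneg ht))
      _ = |(|y| - t)| := by rw [dist_pt_pt_of_fst_eq, abs_of_nonneg hy]
  · calc infDist (pt x y) (rpowCurve c η) ≤ dist (pt x y) (pt x (-t)) :=
          infDist_le_dist_of_mem (hmem (-t) (by rw [abs_neg, abs_of_nonneg ht]))
      _ = |(|y| - t)| := by rw [dist_pt_pt_of_fst_eq, abs_of_nonpos hy, ← abs_neg]; ring_nf

theorem abs_sub_le_mul_dist_of_mem_rpowCurve (hc : 0 < c) (hη0 : 0 < η) (hη1 : η ≤ 1)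
    {x y : ℝ} (hx0 : 0 ≤ x) (hxc : x ≤ c) (hy : |y| ≤ 1) {w : EuclideanSpace ℝ (Fin 2)}
    (hw : w ∈ rpowCurve c η) :
    |(|y| - (c⁻¹ * x) ^ (1 / η))| ≤ (1 + 1 / η * 2 ^ (1 / η - 1) * c⁻¹) * dist (pt x y) w := by
  set t := (c⁻¹ * x) ^ (1 / η)
  set s := |w 1|
  set d := dist (pt x y) w
  have hp : 1 ≤ 1 / η := by rwa [le_div_iff₀ hη0, one_mul]
  have hcx : c⁻¹ * x ∈ Icc 0 1 := ⟨by positivity, by rwa [inv_mul_le_iff₀ hc, mul_one]⟩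
  have ht : t ∈ Icc 0 1 := ⟨by positivity, Real.rpow_le_one hcx.1 hcx.2 (by positivity)⟩
  have hys : |(|y| - s)| ≤ d := (abs_abs_sub_abs_le_abs_sub _ _).trans <| by
    simpa [Real.dist_eq] using PiLp.dist_apply_le (pt x y) w 1
  have hxw : |c⁻¹ * w 0 - c⁻¹ * x| ≤ c⁻¹ * d := by
    rw [← mul_sub, abs_mul, abs_of_pos (inv_pos.2 hc)]
    gcongr
    simpa [Real.dist_eq, abs_sub_comm] using PiLp.dist_apply_le (pt x y) w 0
  have hKd : 0 ≤ 1 / η * 2 ^ (1 / η - 1) * c⁻¹ * d := by positivity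
  rcases le_or_gt s 2 with hs | hs
  · have hcw : c⁻¹ * w 0 ∈ Icc 0 2 := by
      rw [hw, inv_mul_cancel_left₀ hc.ne']
      refine ⟨by positivity, (Real.rpow_le_rpow (abs_nonneg _) hs hη0.le).trans ?_⟩
      simpa using Real.rpow_le_rpow_of_exponent_le one_le_two hη1
    have hst : |s - t| ≤ 1 / η * 2 ^ (1 / η - 1) * c⁻¹ * d := by
      calc |s - t| = |(c⁻¹ * w 0) ^ (1 / η) - (c⁻¹ * x) ^ (1 / η)| := by
            rw [show s = _ from abs_apply_one_eq_of_mem_rpowCurve hc hη0 hw]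
        _ ≤ 1 / η * 2 ^ (1 / η - 1) * |c⁻¹ * w 0 - c⁻¹ * x| :=
            abs_rpow_sub_rpow_le hp hcw ⟨hcx.1, hcx.2.trans one_le_two⟩
        _ ≤ 1 / η * 2 ^ (1 / η - 1) * c⁻¹ * d := by rw [mul_assoc _ c⁻¹]; gcongr
    calc |(|y| - t)| ≤ |(|y| - s)| + |s - t| := abs_sub_le _ _ _
      _ ≤ (1 + 1 / η * 2 ^ (1 / η - 1) * c⁻¹) * d := by linarith
  · have hyt : |(|y| - t)| ≤ 1 :=
      abs_sub_le_iff.2 ⟨by linarith [ht.1], by linarith [abs_nonneg y, ht.2]⟩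
    have hd : 1 < d := by linarith [neg_abs_le (|y| - s)]
    nlinarith

theorem inv_mul_abs_sub_le_infDist_rpowCurve (hc : 0 < c) (hη0 : 0 < η) (hη1 : η ≤ 1)
    {x y : ℝ} (hx0 : 0 ≤ x) (hxc : x ≤ c) (hy : |y| ≤ 1) :
    (1 + 1 / η * 2 ^ (1 / η - 1) * c⁻¹)⁻¹ * |(|y| - (c⁻¹ * x) ^ (1 / η))| ≤
      infDist (pt x y) (rpowCurve c η) :=
  (le_infDist ⟨0, zero_mem_rpowCurve hη0⟩).2 fun _ hw ↦ by
    rw [inv_mul_le_iff₀ (by positivity)]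
    exact abs_sub_le_mul_dist_of_mem_rpowCurve hc hη0 hη1 hx0 hxc hy hw

end

/-- For `η ∈ (0,1]`, `c > 0` and `Γ_c = {(x,y) : x = c|y|^η}`, there are `C > 1`, `ε > 0`
such that for points `(x₀,y₀)` with `x₀ ≥ 0`, `x₀, |y₀| < ε`:
`C⁻¹ ||y₀| − (c⁻¹x₀)^{1/η}| ≤ dist((x₀,y₀), Γ_c) ≤ C ||y₀| − (c⁻¹x₀)^{1/η}|`. -/
theorem stmt8 (η c : ℝ) (hη0 : 0 < η) (hη1 : η ≤ 1) (hc : 0 < c) :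
    ∃ C : ℝ, 1 < C ∧ ∃ ε : ℝ, 0 < ε ∧
      ∀ x₀ y₀ : ℝ, 0 ≤ x₀ → x₀ < ε → |y₀| < ε →
        C⁻¹ * |(|y₀| - (c⁻¹ * x₀) ^ (1/η))| ≤
          Metric.infDist (pt x₀ y₀)
            {w : EuclideanSpace ℝ (Fin 2) | w 0 = c * |w 1| ^ η} ∧
        Metric.infDist (pt x₀ y₀)
            {w : EuclideanSpace ℝ (Fin 2) | w 0 = c * |w 1| ^ η}
          ≤ C * |(|y₀| - (c⁻¹ * x₀) ^ (1/η))| := by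
  have hK : 0 < 1 / η * 2 ^ (1 / η - 1) * c⁻¹ := by positivity
  refine ⟨1 + 1 / η * 2 ^ (1 / η - 1) * c⁻¹, by linarith, min 1 c, by positivity, ?_⟩
  intro x₀ y₀ hx₀ hxε hyε
  refine ⟨inv_mul_abs_sub_le_infDist_rpowCurve hc hη0 hη1 hx₀
    (hxε.trans_le (min_le_right _ _)).le (hyε.trans_le (min_le_left _ _)).le, ?_⟩
  exact (infDist_pt_rpowCurve_le hc hη0 hx₀ y₀).trans
    (le_mul_of_one_le_left (abs_nonneg _) (by linarith))
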